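/- Let G be a K-IC structure with inner vertex set V_I which contains no cycle consisting only of non-inner vertices. Then the index code of Construction 1 over a finite field F of characteristic 2 is decodable by Algorithm 1: for every inner vertex i, the combination Z_i = W_I ⊕ (⊕_{j ∈ V_NI(i)} W_j) equals x_i ⊕ (⊕_{j ∈ S} x_j) for some subset S ⊆ N^+_{T_i}(i) ⊆ N^+_G(i). (Corollary of Theorems 1 and 2) -/

import Mathlib

namespace ICPaper

variable {V : Type*}

/-- A directed cycle: a nonempty list of distinct vertices, consecutive vertices joined by
edges, and an edge from the last vertex back to the first (positive length). -/
def IsCycle (E : V → V → Prop) (l : List V) : Prop :=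
  l ≠ [] ∧ l.Nodup ∧ l.Chain' E ∧
    ∃ a b, l.getLast? = some a ∧ l.head? = some b ∧ E a b

/-- A directed path from `a` to `b`: consecutive vertices joined by edges, distinct vertices. -/
def IsPathList (E : V → V → Prop) (a b : V) (l : List V) : Prop :=
  l.Chain' E ∧ l.head? = some a ∧ l.getLast? = some b ∧ l.Nodup

/-- An I-path: a directed path from an inner vertex `a` to a different inner vertex `b`
all of whose intermediate vertices are non-inner. -/
def IsIPath (E : V → V → Prop) (VI : Set V) (a b : V) (l : List V) : Prop :=
  a ∈ VI ∧ b ∈ VI ∧ a ≠ b ∧ IsPathList E a b l ∧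
    ∀ v ∈ l, v ≠ a → v ≠ b → v ∉ VI

/-- `G = (V, E)` is a `K`-IC structure with inner vertex set `VI`:
(0) `|VI| = K`; (1) no cycle contains exactly one inner vertex (no I-cycle);
(2) between any ordered pair of distinct inner vertices there is exactly one I-path;
(3) every vertex and every edge lies on one of these I-paths. -/
def IsICStructure (E : V → V → Prop) (VI : Set V) (K : ℕ) : Prop :=
  VI.ncard = K ∧
  (¬ ∃ l, IsCycle E l ∧ (∃! v, v ∈ l ∧ v ∈ VI)) ∧
  (∀ a ∈ VI, ∀ b ∈ VI, a ≠ b → ∃! l, IsIPath E VI a b l) ∧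
  (∀ v : V, ∃ a b l, IsIPath E VI a b l ∧ v ∈ l) ∧
  (∀ u w : V, E u w → ∃ a b l, IsIPath E VI a b l ∧ [u, w] <:+: l)

/-- Vertex set of the rooted tree `T i`: the union of the I-paths starting at `i`. -/
def treeVerts (E : V → V → Prop) (VI : Set V) (i : V) : Set V :=
  {v | ∃ b l, IsIPath E VI i b l ∧ v ∈ l}

/-- `(u, w)` is an edge of the rooted tree `T i`. -/
def treeEdge (E : V → V → Prop) (VI : Set V) (i u w : V) : Prop :=
  ∃ b l, IsIPath E VI i b l ∧ [u, w] <:+: l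

/-- `V_NI(i)`: the non-inner vertices of the rooted tree `T i`. -/
def VNI (E : V → V → Prop) (VI : Set V) (i : V) : Set V :=
  treeVerts E VI i \ VI

/-- `N^+_{T i}(i)`: the out-neighbourhood of `i` in the rooted tree `T i`. -/
def NplusT (E : V → V → Prop) (VI : Set V) (i : V) : Set V :=
  {w | treeEdge E VI i i w}

/-- `N^+_G(v)`: the out-neighbourhood of `v` in `G`. -/
def NplusG (E : V → V → Prop) (v : V) : Set V := {w | E v w}

/-- The quantity `|{v ∈ V_NI(i) : j ∈ N^+_G(v)}|`; this is `a_{i,j}` when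
`j ∈ V_NI(i) \ N^+_{T i}(i)` and `b_{i,j}` when `j ∉ V(T i)`. -/
noncomputable def coeffCount (E : V → V → Prop) (VI : Set V) (i j : V) : ℕ :=
  {v | v ∈ VNI E VI i ∧ E v j}.ncard

/-- Condition c1: `a_{i,j}` is odd for every inner vertex `i` and every
`j ∈ V_NI(i) \ N^+_{T i}(i)`. -/
def CondC1 (E : V → V → Prop) (VI : Set V) : Prop :=
  ∀ i ∈ VI, ∀ j ∈ VNI E VI i, j ∉ NplusT E VI i → Odd (coeffCount E VI i j)

/-- Condition c2: `b_{i,j} = 0` for every inner vertex `i` and every `j ∉ V(T i)`. -/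
def CondC2 (E : V → V → Prop) (VI : Set V) : Prop :=
  ∀ i ∈ VI, ∀ j, j ∉ treeVerts E VI i → coeffCount E VI i j = 0

/-- Construction 1, symbol `W_I = ⊕_{k ∈ V_I} x_k`. -/
noncomputable def WI {F : Type*} [AddCommMonoid F] (VI : Set V) (x : V → F) : F :=
  ∑ᶠ k ∈ VI, x k

/-- Construction 1, symbol `W_j = x_j ⊕ (⊕_{q ∈ N^+_G(j)} x_q)`. -/
noncomputable def Wsym {F : Type*} [AddCommMonoid F] (E : V → V → Prop) (x : V → F)
    (j : V) : F :=
  x j + ∑ᶠ q ∈ NplusG E j, x q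

/-- Algorithm 1, the combination `Z_i = W_I ⊕ (⊕_{j ∈ V_NI(i)} W_j)`. -/
noncomputable def Z {F : Type*} [AddCommMonoid F] (E : V → V → Prop) (VI : Set V)
    (x : V → F) (i : V) : F :=
  WI VI x + ∑ᶠ j ∈ VNI E VI i, Wsym E x j

end ICPaper

open ICPaper

/-!
Expanding `Z_i`, the message `x_q` occurs `[q ∈ V_I] + [q ∈ V_NI(i)] + #{j ∈ V_NI(i) | j → q}`
times, so in characteristic 2 it survives exactly when this number is odd. For `q = i` it is 1,
because an edge from `V_NI(i)` back to `i` would close an I-cycle. An inner `q ≠ i` has exactly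
one in-neighbour in `V_NI(i)` unless `q ∈ N^+_{T_i}(i)`: the predecessor of `q` on the unique
I-path from `i` to `q`. The remaining vertices are governed by conditions c1 and c2, which make
their multiplicities even (Theorem 1).

Without non-inner cycles, every cycle meets two inner vertices. Then the part of an I-path from
`i` up to a non-inner vertex `m`, followed by the part after `m` of any other I-path through `m`,
is again an I-path: a repeated vertex, or a return to `i`, would close a cycle with at most one
inner vertex. Hence every edge leaving `V_NI(i)` is an edge of `T_i`, and by uniqueness of
I-paths every non-inner vertex of `T_i` has a single parent, which gives c1 and c2 (Theorem 2).
-/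

namespace ICPaper

variable {V : Type*} {E : V → V → Prop} {VI : Set V}

theorem exists_closed_infix_of_not_nodup {l : List V} (h : ¬ l.Nodup) :
    ∃ a s, a :: (s ++ [a]) <:+: l := by
  obtain ⟨a, ha⟩ : ∃ a, [a, a].Sublist l := by simpa [List.nodup_iff_sublist] using h
  obtain ⟨r₁, r₂, rfl, ha₁, ha₂⟩ := List.cons_sublist_iff.mp ha
  obtain ⟨u, s, rfl⟩ := List.append_of_mem ha₁
  obtain ⟨s', t, rfl⟩ := List.append_of_mem (List.singleton_sublist.mp ha₂)
  exact ⟨a, s ++ s', u, t, by simp⟩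

theorem exists_isCycle_subset_of_isChain {w : V} {t : List V}
    (h : (w :: (t ++ [w])).IsChain E) : ∃ c, IsCycle E c ∧ c ⊆ w :: t := by
  induction hn : t.length using Nat.strong_induction_on generalizing w t with
  | _ n ih =>
  by_cases hnd : (w :: t).Nodup
  · have hch : ((w :: t) ++ [w]).IsChain E := by simpa using h
    obtain ⟨a, ha⟩ : ∃ a, (w :: t).getLast? = some a :=
      ⟨_, List.getLast?_eq_some_getLast (by simp)⟩
    exact ⟨w :: t, ⟨by simp, hnd, hch.prefix ⟨[w], rfl⟩, a, w, ha, rfl,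
      (List.isChain_append.mp hch).2.2 a ha w rfl⟩, List.Subset.refl _⟩
  · obtain ⟨a, s, hinf⟩ := exists_closed_infix_of_not_nodup hnd
    have hlen := hinf.length_le
    simp only [List.length_cons, List.length_append, List.length_nil] at hlen
    obtain ⟨c, hc, hcs⟩ := ih s.length (by omega)
      (h.infix (hinf.trans (List.prefix_append _ [w]).isInfix)) rfl
    exact ⟨c, hc, List.Subset.trans hcs (List.Subset.trans
      (List.cons_subset_cons a (List.subset_append_left s [a])) hinf.subset)⟩

def CyclesHaveTwoInner (E : V → V → Prop) (VI : Set V) : Prop :=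
  ∀ c, IsCycle E c → ∃ u ∈ c, ∃ v ∈ c, u ≠ v ∧ u ∈ VI ∧ v ∈ VI

theorem cyclesHaveTwoInner_of (hNoI : ¬ ∃ c, IsCycle E c ∧ ∃! v, v ∈ c ∧ v ∈ VI)
    (hNC : ¬ ∃ c, IsCycle E c ∧ ∀ v ∈ c, v ∉ VI) : CyclesHaveTwoInner E VI := by
  intro c hc
  by_contra! h
  obtain ⟨u, huc, huI⟩ : ∃ u ∈ c, u ∈ VI := by
    by_contra! h'
    exact hNC ⟨c, hc, h'⟩
  exact hNoI ⟨c, hc, u, ⟨huc, huI⟩, fun v ⟨hvc, hvI⟩ =>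
    by_contra fun hvu => h v hvc u huc hvu hvI huI⟩

theorem CyclesHaveTwoInner.not_isChain_closed (hcyc : CyclesHaveTwoInner E VI) {w : V}
    {t : List V} (ht : ∀ v ∈ t, v ∉ VI) : ¬ (w :: (t ++ [w])).IsChain E := by
  intro h
  obtain ⟨c, hc, hcs⟩ := exists_isCycle_subset_of_isChain h
  obtain ⟨u, hu, v, hv, huv, huI, hvI⟩ := hcyc c hc
  have eq_w : ∀ x ∈ c, x ∈ VI → x = w := fun x hx hxI =>
    (List.mem_cons.mp (hcs hx)).resolve_right fun hxt => ht x hxt hxI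
  exact huv ((eq_w u hu huI).trans (eq_w v hv hvI).symm)

theorem CyclesHaveTwoInner.nodup_of_isChain (hcyc : CyclesHaveTwoInner E VI) {l : List V}
    (hl : ∀ v ∈ l, v ∉ VI) (h : l.IsChain E) : l.Nodup := by
  by_contra hnd
  obtain ⟨a, s, hinf⟩ := exists_closed_infix_of_not_nodup hnd
  exact hcyc.not_isChain_closed (fun v hv => hl v (hinf.subset (by simp [hv]))) (h.infix hinf)

theorem IsIPath.isChain {a b : V} {l : List V} (h : IsIPath E VI a b l) : l.IsChain E :=
  h.2.2.2.1.1

theorem IsIPath.nodup {a b : V} {l : List V} (h : IsIPath E VI a b l) : l.Nodup :=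
  h.2.2.2.1.2.2.2

theorem IsIPath.exists_eq_cons_append {a b : V} {l : List V} (h : IsIPath E VI a b l) :
    ∃ M, l = a :: (M ++ [b]) := by
  obtain ⟨-, -, hab, ⟨-, hhead, hlast, -⟩, -⟩ := h
  obtain ⟨t, rfl⟩ := List.head?_eq_some_iff.mp hhead
  cases t with
  | nil => exact absurd (by simpa using hlast) hab
  | cons y t =>
    obtain ⟨M, hM⟩ := List.getLast?_eq_some_iff.mp (by simpa using hlast)
    exact ⟨M, by rw [hM]⟩

theorem isIPath_cons_append_iff {a b : V} {M : List V} :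
    IsIPath E VI a b (a :: (M ++ [b])) ↔ a ∈ VI ∧ b ∈ VI ∧ a ≠ b ∧
      (a :: (M ++ [b])).IsChain E ∧ M.Nodup ∧ ∀ v ∈ M, v ∉ VI := by
  constructor
  · rintro ⟨ha, hb, hab, ⟨hch, -, -, hnd⟩, hni⟩
    have hnd' := hnd
    simp only [List.nodup_cons, List.nodup_append, List.mem_append, List.mem_singleton,
      not_or] at hnd'
    refine ⟨ha, hb, hab, hch, hnd'.2.1, fun v hv => hni v (by simp [hv]) ?_ ?_⟩
    · rintro rfl; exact hnd'.1.1 hv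
    · rintro rfl; exact hnd'.2.2.2 v hv v rfl rfl
  · rintro ⟨ha, hb, hab, hch, hnd, hni⟩
    have hbM : b ∉ M := fun h => hni b h hb
    have haM : a ∉ M := fun h => hni a h ha
    refine ⟨ha, hb, hab, ⟨hch, rfl, List.getLast?_eq_some_iff.mpr ⟨a :: M, rfl⟩, ?_⟩,
      fun v hv hva hvb => ?_⟩
    · simp only [List.nodup_cons, List.nodup_append, List.mem_append, List.mem_singleton]
      exact ⟨by tauto, hnd, by simp, fun v hv w hw hvw => hbM (hw ▸ hvw ▸ hv)⟩
    · simp only [List.mem_cons, List.mem_append] at hv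
      exact hni v (by tauto)

theorem IsIPath.split {a b m : V} {p s : List V} (h : IsIPath E VI a b (p ++ m :: s))
    (hm : m ∉ VI) : ∃ M₁ M₂, p = a :: M₁ ∧ s = M₂ ++ [b] ∧ ∀ v ∈ M₁ ++ m :: M₂, v ∉ VI := by
  obtain ⟨M, hM⟩ := h.exists_eq_cons_append
  have hni := (isIPath_cons_append_iff.mp (hM ▸ h)).2.2.2.2.2
  cases p with
  | nil => exact absurd (List.cons.inj hM).1 fun hma => hm (hma ▸ h.1)
  | cons x p =>
    simp only [List.cons_append, List.cons.injEq] at hM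
    obtain ⟨rfl, hM⟩ := hM
    rcases List.eq_nil_or_concat' s with rfl | ⟨s, y, rfl⟩
    · obtain ⟨-, hmb⟩ := List.append_inj' hM rfl
      exact absurd h.2.1 (List.singleton_inj.mp hmb ▸ hm)
    · have hM' : (p ++ m :: s) ++ [y] = M ++ [b] := by simpa using hM
      obtain ⟨rfl, hyb⟩ := List.append_inj' hM' rfl
      exact ⟨p, s, rfl, by rw [List.singleton_inj.mp hyb], hni⟩

theorem CyclesHaveTwoInner.isIPath_of_isChain (hcyc : CyclesHaveTwoInner E VI) {a b : V}
    {M : List V} (ha : a ∈ VI) (hb : b ∈ VI) (hM : ∀ v ∈ M, v ∉ VI)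
    (hch : (a :: (M ++ [b])).IsChain E) : IsIPath E VI a b (a :: (M ++ [b])) :=
  isIPath_cons_append_iff.mpr ⟨ha, hb, fun hab => hcyc.not_isChain_closed hM (hab ▸ hch), hch,
    hcyc.nodup_of_isChain hM (hch.infix ⟨[a], [b], by simp⟩), hM⟩

theorem CyclesHaveTwoInner.isIPath_splice (hcyc : CyclesHaveTwoInner E VI) {a b c d m : V}
    {p s p' s' : List V} (h : IsIPath E VI a c (p ++ m :: s))
    (h' : IsIPath E VI d b (p' ++ m :: s')) (hm : m ∉ VI) :
    IsIPath E VI a b (p ++ m :: s') := by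
  obtain ⟨M₁, _, rfl, -, hM₁⟩ := h.split hm
  obtain ⟨_, M₂, -, rfl, hM₂⟩ := h'.split hm
  have hch : ((a :: M₁) ++ [m] ++ (M₂ ++ [b])).IsChain E :=
    List.IsChain.append_overlap (h.isChain.prefix ⟨s, by simp⟩)
      (h'.isChain.infix ⟨p', [], by simp⟩) (by simp)
  have := hcyc.isIPath_of_isChain (M := M₁ ++ m :: M₂) h.1 h'.2.1
    (fun v hv => (List.mem_append.mp hv).elim (fun hv => hM₁ v (by simp [hv]))
      fun hv => hM₂ v (by simp_all)) (by simpa using hch)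
  simpa using this

theorem edge_of_treeEdge {i u w : V} (h : treeEdge E VI i u w) : E u w := by
  obtain ⟨b, l, hl, hinf⟩ := h
  exact List.isChain_pair.mp (hl.isChain.infix hinf)

theorem nplusT_subset_nplusG (i : V) : NplusT E VI i ⊆ NplusG E i :=
  fun _ => edge_of_treeEdge

theorem mem_treeVerts_of_treeEdge {i u w : V} (h : treeEdge E VI i u w) :
    w ∈ treeVerts E VI i := by
  obtain ⟨b, l, hl, hinf⟩ := h
  exact ⟨b, l, hl, hinf.subset (by simp)⟩

theorem mem_treeVerts_of_mem
    (hUniq : ∀ a ∈ VI, ∀ b ∈ VI, a ≠ b → ∃! l, IsIPath E VI a b l)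
    {i q : V} (hi : i ∈ VI) (hq : q ∈ VI) (hqi : q ≠ i) : q ∈ treeVerts E VI i := by
  obtain ⟨l, hl, -⟩ := hUniq i hi q hq hqi.symm
  obtain ⟨M, rfl⟩ := hl.exists_eq_cons_append
  exact ⟨q, _, hl, by simp⟩

theorem exists_isIPath_of_mem_VNI {i j : V} (hj : j ∈ VNI E VI i) :
    ∃ b p s, IsIPath E VI i b (p ++ j :: s) := by
  obtain ⟨⟨b, l, hl, hjl⟩, -⟩ := hj
  obtain ⟨p, s, rfl⟩ := List.append_of_mem hjl
  exact ⟨b, p, s, hl⟩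

theorem exists_treeEdge_of_mem_treeVerts {i v : V} (hv : v ∈ treeVerts E VI i) (hvi : v ≠ i) :
    ∃ u, treeEdge E VI i u v ∧ (u = i ∨ u ∈ VNI E VI i) := by
  obtain ⟨b, l, hl, hvl⟩ := hv
  obtain ⟨p, s, rfl⟩ := List.append_of_mem hvl
  obtain ⟨-, hhead, hlast, hnd⟩ := hl.2.2.2.1
  rcases List.eq_nil_or_concat' p with rfl | ⟨p, u, rfl⟩
  · exact absurd (by simpa using hhead) hvi
  refine ⟨u, ⟨b, _, hl, p, s, by simp⟩, ?_⟩
  by_cases hu : u ∈ VI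
  · have hub : u ≠ b := by
      rw [List.getLast?_append_of_ne_nil _ (List.cons_ne_nil v s)] at hlast
      exact fun hub => (List.nodup_append.mp hnd).2.2 u (by simp) u
        (hub ▸ List.mem_of_getLast? hlast) rfl
    exact Or.inl (by_contra fun hui => hl.2.2.2.2 u (by simp) hui hub hu)
  · exact Or.inr ⟨⟨b, _, hl, by simp⟩, hu⟩

theorem not_edge_VNI_root (hNoI : ¬ ∃ c, IsCycle E c ∧ ∃! v, v ∈ c ∧ v ∈ VI) {i j : V}
    (hj : j ∈ VNI E VI i) : ¬ E j i := by
  intro hE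
  obtain ⟨b, p, s, h⟩ := exists_isIPath_of_mem_VNI hj
  obtain ⟨M₁, M₂, rfl, rfl, hM⟩ := h.split hj.2
  have hpre : (i :: (M₁ ++ [j])) <+: (i :: M₁) ++ j :: (M₂ ++ [b]) := ⟨M₂ ++ [b], by simp⟩
  refine hNoI ⟨i :: (M₁ ++ [j]), ⟨by simp, h.nodup.sublist hpre.sublist,
    h.isChain.prefix hpre, j, i, List.getLast?_eq_some_iff.mpr ⟨i :: M₁, rfl⟩, rfl, hE⟩,
    i, ⟨by simp, h.1⟩, ?_⟩
  rintro v ⟨hv, hvI⟩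
  refine (List.mem_cons.mp hv).resolve_right fun hv => hM v ?_ hvI
  simp only [List.mem_append, List.mem_cons] at hv ⊢
  tauto

theorem exists_isIPath_of_edge_of_mem {i j q : V} (hj : j ∈ VNI E VI i) (hE : E j q)
    (hq : q ∈ VI) (hqi : q ≠ i) : ∃ p, IsIPath E VI i q (p ++ [j, q]) := by
  obtain ⟨b, p, s, h⟩ := exists_isIPath_of_mem_VNI hj
  obtain ⟨M₁, M₂, rfl, rfl, hM⟩ := h.split hj.2
  have hpre : (i :: (M₁ ++ [j])) <+: (i :: M₁) ++ j :: (M₂ ++ [b]) := ⟨M₂ ++ [b], by simp⟩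
  have hch : ((i :: M₁) ++ [j] ++ [q]).IsChain E :=
    List.IsChain.append_overlap (h.isChain.prefix hpre) (List.isChain_pair.mpr hE) (by simp)
  have := isIPath_cons_append_iff.mpr ⟨h.1, hq, hqi.symm, by simpa using hch,
    ((List.nodup_cons.mp (h.nodup.sublist hpre.sublist)).2),
    fun v hv => hM v (by simp only [List.mem_append, List.mem_cons] at hv ⊢; tauto)⟩
  exact ⟨i :: M₁, by simpa using this⟩

theorem CyclesHaveTwoInner.treeEdge_of_edge (hcyc : CyclesHaveTwoInner E VI)
    (hEdge : ∀ u w : V, E u w → ∃ a b l, IsIPath E VI a b l ∧ [u, w] <:+: l)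
    {i j v : V} (hj : j ∈ VNI E VI i) (hE : E j v) : treeEdge E VI i j v := by
  obtain ⟨c, p, s, hP⟩ := exists_isIPath_of_mem_VNI hj
  obtain ⟨a, b, _, hQ, q, q', rfl⟩ := hEdge j v hE
  have hQ' : IsIPath E VI a b (q ++ j :: (v :: q')) := by simpa using hQ
  exact ⟨b, _, hcyc.isIPath_splice hP hQ' hj.2, p, q', by simp⟩

theorem CyclesHaveTwoInner.eq_of_treeEdge_of_not_mem (hcyc : CyclesHaveTwoInner E VI)
    (hUniq : ∀ a ∈ VI, ∀ b ∈ VI, a ≠ b → ∃! l, IsIPath E VI a b l)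
    {i u u' v : V} (hv : v ∉ VI) (h : treeEdge E VI i u v) (h' : treeEdge E VI i u' v) :
    u = u' := by
  obtain ⟨b, _, hl, r, s, rfl⟩ := h
  obtain ⟨b', _, hQ, r', s', rfl⟩ := h'
  have hl' : IsIPath E VI i b ((r ++ [u]) ++ v :: s) := by simpa using hl
  have hQ' : IsIPath E VI i b' ((r' ++ [u']) ++ v :: s') := by simpa using hQ
  have heq := (hUniq i hQ.1 b' hQ.2.1 hQ.2.2.1).unique (hcyc.isIPath_splice hl' hQ' hv) hQ'
  exact List.singleton_inj.mp (List.append_inj' (List.append_cancel_right heq) rfl).2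

theorem eq_of_edge_of_mem (hUniq : ∀ a ∈ VI, ∀ b ∈ VI, a ≠ b → ∃! l, IsIPath E VI a b l)
    {i j j' q : V} (hi : i ∈ VI) (hq : q ∈ VI) (hqi : q ≠ i) (hj : j ∈ VNI E VI i)
    (hj' : j' ∈ VNI E VI i) (hE : E j q) (hE' : E j' q) : j = j' := by
  obtain ⟨p, hp⟩ := exists_isIPath_of_edge_of_mem hj hE hq hqi
  obtain ⟨p', hp'⟩ := exists_isIPath_of_edge_of_mem hj' hE' hq hqi
  have heq := (hUniq i hi q hq hqi.symm).unique hp hp'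
  simpa using (List.append_inj' heq rfl).2

theorem coeffCount_eq_zero {i q : V} (h : ∀ j ∈ VNI E VI i, ¬ E j q) :
    coeffCount E VI i q = 0 := by
  rw [coeffCount, Set.eq_empty_of_forall_notMem (s := {v | v ∈ VNI E VI i ∧ E v q})
    fun j hj => h j hj.1 hj.2, Set.ncard_empty]

theorem coeffCount_eq_one {i q : V} (hq : q ∈ treeVerts E VI i) (hqi : q ≠ i)
    (hqT : q ∉ NplusT E VI i)
    (hpred : ∀ j ∈ VNI E VI i, ∀ j' ∈ VNI E VI i, E j q → E j' q → j = j') :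
    coeffCount E VI i q = 1 := by
  obtain ⟨u, hu, hu'⟩ := exists_treeEdge_of_mem_treeVerts hq hqi
  have huV : u ∈ VNI E VI i := hu'.resolve_left fun hui => hqT (hui ▸ hu)
  refine Set.ncard_eq_one.mpr ⟨u, Set.ext fun j => ⟨fun ⟨hj, hE⟩ => ?_, ?_⟩⟩
  · exact hpred j hj u huV hE (edge_of_treeEdge hu)
  · rintro rfl; exact ⟨huV, edge_of_treeEdge hu⟩

theorem condC1_of_no_noninner_cycle {K : ℕ} (hIC : IsICStructure E VI K)
    (hNC : ¬ ∃ l, IsCycle E l ∧ ∀ v ∈ l, v ∉ VI) : CondC1 E VI := by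
  obtain ⟨-, hNoI, hUniq, -, hEdge⟩ := hIC
  have hcyc := cyclesHaveTwoInner_of hNoI hNC
  intro i hi q hq hqT
  rw [coeffCount_eq_one hq.1 (fun hqi => hq.2 (hqi ▸ hi)) hqT fun j hj j' hj' hE hE' =>
    hcyc.eq_of_treeEdge_of_not_mem hUniq hq.2 (hcyc.treeEdge_of_edge hEdge hj hE)
      (hcyc.treeEdge_of_edge hEdge hj' hE')]
  exact odd_one

theorem condC2_of_no_noninner_cycle {K : ℕ} (hIC : IsICStructure E VI K)
    (hNC : ¬ ∃ l, IsCycle E l ∧ ∀ v ∈ l, v ∉ VI) : CondC2 E VI := by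
  obtain ⟨-, hNoI, -, -, hEdge⟩ := hIC
  intro i _ q hq
  exact coeffCount_eq_zero fun j hj hE => hq (mem_treeVerts_of_treeEdge
    ((cyclesHaveTwoInner_of hNoI hNC).treeEdge_of_edge hEdge hj hE))

theorem nsmul_eq_ite_odd {M : Type*} [AddMonoid M] {y : M} (hy : y + y = 0) (n : ℕ) :
    n • y = if Odd n then y else 0 := by
  rcases n.even_or_odd' with ⟨k, rfl | rfl⟩
  · rw [mul_nsmul, two_nsmul, hy, nsmul_zero, if_neg (Nat.not_odd_iff_even.mpr (even_two_mul k))]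
  · rw [succ_nsmul, mul_nsmul, two_nsmul, hy, nsmul_zero, zero_add,
      if_pos (odd_two_mul_add_one k)]

theorem sum_nsmul_eq_add_finsum [Fintype V] {M : Type*} [AddCommMonoid M]
    (hM : ∀ y : M, y + y = 0) (c : V → ℕ) (x : V → M) {i : V} (hi : c i = 1) :
    ∑ q, c q • x q = x i + ∑ᶠ q ∈ {q | q ≠ i ∧ Odd (c q)}, x q := by
  classical
  rw [finsum_mem_def, finsum_eq_sum_of_fintype, Fintype.sum_eq_add_sum_compl i,
    Fintype.sum_eq_add_sum_compl i (Set.indicator _ _), hi, one_smul,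
    Set.indicator_of_notMem (fun h => h.1 rfl), zero_add]
  refine congrArg _ (Finset.sum_congr rfl fun q hq => ?_)
  have hqi : q ≠ i := by simpa using hq
  simp [nsmul_eq_ite_odd (hM _), Set.indicator_apply, hqi]

open Classical in
/-- The multiplicity of `x q` in `Z_i`. -/
noncomputable def zCoeff (E : V → V → Prop) (VI : Set V) (i q : V) : ℕ :=
  (if q ∈ VI then 1 else 0) + (if q ∈ VNI E VI i then 1 else 0) + coeffCount E VI i q

theorem Z_eq_sum_zCoeff_nsmul [Fintype V] {F : Type*} [AddCommMonoid F] (x : V → F) (i : V) :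
    Z E VI x i = ∑ q, zCoeff E VI i q • x q := by
  classical
  have hcount : ∀ q, coeffCount E VI i q = ∑ j, if j ∈ VNI E VI i ∧ E j q then 1 else 0 := by
    intro q
    rw [coeffCount, Set.ncard_eq_toFinset_card', Set.toFinset_ofPred, Finset.card_filter]
  simp only [Z, WI, Wsym, NplusG, finsum_eq_sum_of_fintype, finsum_eq_if, Set.mem_ofPred_eq,
    ite_add_zero, Finset.sum_add_distrib, Finset.ite_sum_zero, zCoeff, add_smul, hcount,
    Finset.sum_smul, ite_smul, one_smul, zero_smul, ite_and]
  rw [Finset.sum_comm (f := fun q j => _), add_assoc]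

theorem zCoeff_self (hNoI : ¬ ∃ c, IsCycle E c ∧ ∃! v, v ∈ c ∧ v ∈ VI) {i : V} (hi : i ∈ VI) :
    zCoeff E VI i i = 1 := by
  have hiV : i ∉ VNI E VI i := fun h => h.2 hi
  simp [zCoeff, hi, hiV, coeffCount_eq_zero fun j hj => not_edge_VNI_root hNoI hj]

theorem even_zCoeff (hUniq : ∀ a ∈ VI, ∀ b ∈ VI, a ≠ b → ∃! l, IsIPath E VI a b l)
    (hC1 : CondC1 E VI) (hC2 : CondC2 E VI) {i q : V} (hi : i ∈ VI) (hqi : q ≠ i)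
    (hqT : q ∉ NplusT E VI i) : Even (zCoeff E VI i q) := by
  by_cases hqI : q ∈ VI
  · have hqV : q ∉ VNI E VI i := fun h => h.2 hqI
    have hcount := coeffCount_eq_one (mem_treeVerts_of_mem hUniq hi hqI hqi) hqi hqT
      fun j hj j' hj' hE hE' => eq_of_edge_of_mem hUniq hi hqI hqi hj hj' hE hE'
    simp [zCoeff, hqI, hqV, hcount]
  by_cases hqV : q ∈ VNI E VI i
  · simpa [zCoeff, hqI, hqV, Nat.even_add_one, add_comm 1] using hC1 i hi q hqV hqT
  · have hqT' : q ∉ treeVerts E VI i := fun h => hqV ⟨h, hqI⟩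
    simp [zCoeff, hqI, hqV, hC2 i hi q hqT']

def DecodableByAlgorithm1 (E : V → V → Prop) (VI : Set V) (F : Type*) [AddCommMonoid F] :
    Prop :=
  ∀ i ∈ VI, NplusT E VI i ⊆ NplusG E i ∧
    ∃ S ⊆ NplusT E VI i, ∀ x : V → F, Z E VI x i = x i + ∑ᶠ j ∈ S, x j

theorem decodable_of_condC1_condC2 [Fintype V] (F : Type*) [Semiring F] [CharP F 2] {K : ℕ}
    (hIC : IsICStructure E VI K) (hC1 : CondC1 E VI) (hC2 : CondC2 E VI) :
    DecodableByAlgorithm1 E VI F := by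
  obtain ⟨-, hNoI, hUniq, -, -⟩ := hIC
  intro i hi
  refine ⟨nplusT_subset_nplusG i, {q | q ≠ i ∧ Odd (zCoeff E VI i q)}, ?_, fun x => ?_⟩
  · rintro q ⟨hqi, hodd⟩
    by_contra hqT
    exact Nat.not_even_iff_odd.mpr hodd (even_zCoeff hUniq hC1 hC2 hi hqi hqT)
  · rw [Z_eq_sum_zCoeff_nsmul,
      sum_nsmul_eq_add_finsum CharTwo.add_self_eq_zero _ _ (zCoeff_self hNoI hi)]

end ICPaper

theorem decodable_of_no_noninner_cycle_general {V : Type*} [Fintype V]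
    (F : Type*) [Field F] [CharP F 2]
    (E : V → V → Prop) (VI : Set V) (K : ℕ) (hIC : IsICStructure E VI K)
    (hNC : ¬ ∃ l, IsCycle E l ∧ ∀ v ∈ l, v ∉ VI) :
    ∀ i ∈ VI, NplusT E VI i ⊆ NplusG E i ∧
      ∃ S ⊆ NplusT E VI i, ∀ x : V → F,
        Z E VI x i = x i + ∑ᶠ j ∈ S, x j :=
  decodable_of_condC1_condC2 F hIC (condC1_of_no_noninner_cycle hIC hNC)
    (condC2_of_no_noninner_cycle hIC hNC)

/-- **Corollary of Theorems 1 and 2.** If a `K`-IC structure has no cycle consisting only of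
non-inner vertices, then the Construction-1 index code is decodable by Algorithm 1: for
every inner vertex `i` the combination `Z_i` equals `x_i ⊕ (⊕_{j ∈ S} x_j)` for some
`S ⊆ N^+_{T i}(i) ⊆ N^+_G(i)`. -/
theorem decodable_of_no_noninner_cycle {V : Type*} [Fintype V] [DecidableEq V]
    (F : Type*) [Field F] [Fintype F] [CharP F 2]
    (E : V → V → Prop) (VI : Set V) (K : ℕ) (hIC : IsICStructure E VI K)
    (hNC : ¬ ∃ l, IsCycle E l ∧ ∀ v ∈ l, v ∉ VI) :
    ∀ i ∈ VI, NplusT E VI i ⊆ NplusG E i ∧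
      ∃ S ⊆ NplusT E VI i, ∀ x : V → F,
        Z E VI x i = x i + ∑ᶠ j ∈ S, x j :=
  decodable_of_no_noninner_cycle_general F E VI K hIC hNC
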